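/- Theorem 2, quantitative content (accuracy and complexity of the level/sample choices). Fix constants K ≥ 1, Δt₀ ∈ (0,1] and δ ∈ (0, 1/2), and set Δt_ℓ = Δt₀·2^{−ℓ}. There exist ε₀ > 0 and C > 0 (depending only on K, Δt₀, δ) such that for every ε ∈ (0, ε₀), choosing L = ⌈ (1/(1/2 − δ)) · log₂( 2 K Δt₀^{1/2−δ} / ε ) ⌉, N₀ = 4 K² L² (L+1)² ε^{−2}, and N_ℓ = 4 K² Δt_ℓ L² (L+1)² ε^{−2} for 1 ≤ ℓ ≤ L (N_ℓ real-valued), one has both: (i) the error bound K ( Δt_L^{1/2−δ} + L/√N₀ + Σ_{m=1}^{L} m·√(Δt_m / N_m) ) ≤ ε, and (ii) the complexity bound Σ_{ℓ=0}^{L} N_ℓ / Δt_ℓ ≤ C · ε^{−2} · (log(1/ε))^5. -/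

import Mathlib

/-!
Write `a = 1/2 - δ`. The choice of `L` gives `2K (Δt₀/2^L)^a ≤ ε`, so the bias contributes at
most `ε/2`. The sample sizes are `N_ℓ = Δt_ℓ M²` with `M = 2KL(L+1)/ε` (and `N₀ = M²`), so every
`√(Δt_m/N_m)` equals `1/M` and the statistical error is exactly `ε(L+3)/(4(L+1)) ≤ ε/2`. Every
level costs `N_ℓ/Δt_ℓ = M²` except the coarsest, which costs `M²/Δt₀`; the total `M²(L + 1/Δt₀)`
is `O((L+1)⁵/ε²)`, and `L + 1 = O(log(1/ε))` once `ε < e⁻¹`.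
-/

open Finset Real

theorem sum_Icc_one_natCast_eq (L : ℕ) : ∑ m ∈ Icc 1 L, (m : ℝ) = L * (L + 1) / 2 := by
  induction L with
  | zero => simp
  | succ n ih =>
    rw [sum_Icc_succ_top (Nat.le_add_left 1 n), ih]
    push_cast
    ring

theorem mul_div_two_pow_rpow_le {a c Δ ε : ℝ} {L : ℕ} (ha : 0 < a) (hc : 0 < c) (hΔ : 0 < Δ)
    (hε : 0 < ε) (hL : 1 / a * logb 2 (c * Δ ^ a / ε) ≤ L) :
    c * (Δ / 2 ^ L) ^ a ≤ ε := by
  have hlogb : logb 2 (c * Δ ^ a / ε) ≤ a * L := by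
    rwa [one_div, inv_mul_le_iff₀ ha] at hL
  have h2pow : c * Δ ^ a / ε ≤ 2 ^ (a * L) :=
    (logb_le_iff_le_rpow one_lt_two (by positivity)).mp hlogb
  have hsplit : (Δ / 2 ^ L) ^ a = Δ ^ a / 2 ^ (a * L) := by
    rw [div_rpow hΔ.le (by positivity), ← rpow_natCast, ← rpow_mul zero_le_two, mul_comm]
  rw [hsplit, mul_div_assoc', div_le_iff₀ (by positivity)]
  rw [div_le_iff₀ hε] at h2pow
  linarith

theorem natCeil_mul_logb_add_one_le {a B ε : ℝ} (ha : 0 < a) (hB : 0 < B) (hε : 0 < ε)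
    (hεe : ε ≤ exp (-1)) :
    (⌈1 / a * logb 2 (B / ε)⌉₊ : ℝ) + 1 ≤ ((|log B| + 1) / (a * log 2) + 2) * log (1 / ε) := by
  have hinv : 1 ≤ log (1 / ε) := by
    rw [one_div, log_inv, le_neg, ← log_exp (-1)]
    exact log_le_log hε hεe
  have hx : 1 / a * logb 2 (B / ε) ≤ (|log B| + 1) / (a * log 2) * log (1 / ε) := by
    have hlog : log (B / ε) ≤ (|log B| + 1) * log (1 / ε) := by
      rw [log_div hB.ne' hε.ne', ← neg_neg (log ε), ← log_inv, ← one_div]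
      nlinarith [le_abs_self (log B), abs_nonneg (log B)]
    rw [logb, show 1 / a * (log (B / ε) / log 2) = log (B / ε) / (a * log 2) by ring,
      div_mul_eq_mul_div]
    gcongr
  have hceil : (⌈1 / a * logb 2 (B / ε)⌉₊ : ℝ) < (|log B| + 1) / (a * log 2) * log (1 / ε) + 1 := by
    calc (⌈1 / a * logb 2 (B / ε)⌉₊ : ℝ)
        ≤ ⌈(|log B| + 1) / (a * log 2) * log (1 / ε)⌉₊ := by
          exact_mod_cast Nat.ceil_le_ceil hx
      _ < (|log B| + 1) / (a * log 2) * log (1 / ε) + 1 := Nat.ceil_lt_add_one (by positivity)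
  nlinarith

namespace MLMC

variable {K Δ ε : ℝ} {L : ℕ} {N : ℕ → ℝ}

theorem statistical_error_eq (hK : 0 < K) (hΔ : 0 < Δ) (hε : 0 < ε) (hL : 1 ≤ L)
    (hN0 : N 0 = 4 * K ^ 2 * (L : ℝ) ^ 2 * ((L : ℝ) + 1) ^ 2 / ε ^ 2)
    (hN : ∀ ℓ, 1 ≤ ℓ → N ℓ = 4 * K ^ 2 * (Δ / 2 ^ ℓ) * (L : ℝ) ^ 2 * ((L : ℝ) + 1) ^ 2 / ε ^ 2) :
    K * ((L : ℝ) / √(N 0) + ∑ m ∈ Icc 1 L, (m : ℝ) * √((Δ / 2 ^ m) / N m))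
      = ε * (L + 3) / (4 * (L + 1)) := by
  have hLpos : (0 : ℝ) < L := by exact_mod_cast hL
  set M : ℝ := 2 * K * L * (L + 1) / ε
  have hM : 0 < M := by positivity
  have hsqrt0 : √(N 0) = M := by
    rw [hN0, show 4 * K ^ 2 * (L : ℝ) ^ 2 * ((L : ℝ) + 1) ^ 2 / ε ^ 2 = M ^ 2 by ring,
      sqrt_sq hM.le]
  have hsqrt : ∀ m ∈ Icc 1 L, (m : ℝ) * √((Δ / 2 ^ m) / N m) = m * M⁻¹ := by
    intro m hm
    rw [hN m (mem_Icc.mp hm).1, show 4 * K ^ 2 * (Δ / 2 ^ m) * (L : ℝ) ^ 2 * ((L : ℝ) + 1) ^ 2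
      / ε ^ 2 = (Δ / 2 ^ m) * M ^ 2 by ring, div_mul_cancel_left₀ (by positivity),
      ← inv_pow, sqrt_sq (by positivity)]
  rw [hsqrt0, sum_congr rfl hsqrt, ← sum_mul, sum_Icc_one_natCast_eq]
  simp only [M]
  field_simp
  ring

theorem error_le {a : ℝ} (hK : 0 < K) (hΔ : 0 < Δ) (hε : 0 < ε) (hL : 1 ≤ L)
    (hbias : 2 * K * (Δ / 2 ^ L) ^ a ≤ ε)
    (hN0 : N 0 = 4 * K ^ 2 * (L : ℝ) ^ 2 * ((L : ℝ) + 1) ^ 2 / ε ^ 2)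
    (hN : ∀ ℓ, 1 ≤ ℓ → N ℓ = 4 * K ^ 2 * (Δ / 2 ^ ℓ) * (L : ℝ) ^ 2 * ((L : ℝ) + 1) ^ 2 / ε ^ 2) :
    K * ((Δ / 2 ^ L) ^ a + (L : ℝ) / √(N 0) + ∑ m ∈ Icc 1 L, (m : ℝ) * √((Δ / 2 ^ m) / N m))
      ≤ ε := by
  have hstat := statistical_error_eq hK hΔ hε hL hN0 hN
  have hL1 : (1 : ℝ) ≤ L := by exact_mod_cast hL
  have hhalf : ε * (L + 3) / (4 * (L + 1)) ≤ ε / 2 := by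
    rw [div_le_div_iff₀ (by positivity) two_pos]
    nlinarith
  rw [add_assoc, mul_add, hstat]
  linarith

theorem cost_eq (hΔ : 0 < Δ)
    (hN0 : N 0 = 4 * K ^ 2 * (L : ℝ) ^ 2 * ((L : ℝ) + 1) ^ 2 / ε ^ 2)
    (hN : ∀ ℓ, 1 ≤ ℓ → N ℓ = 4 * K ^ 2 * (Δ / 2 ^ ℓ) * (L : ℝ) ^ 2 * ((L : ℝ) + 1) ^ 2 / ε ^ 2) :
    ∑ ℓ ∈ range (L + 1), N ℓ / (Δ / 2 ^ ℓ)
      = 4 * K ^ 2 * (L : ℝ) ^ 2 * ((L : ℝ) + 1) ^ 2 / ε ^ 2 * (L + 1 / Δ) := by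
  have hfine : ∀ ℓ ∈ range L, N (ℓ + 1) / (Δ / 2 ^ (ℓ + 1))
      = 4 * K ^ 2 * (L : ℝ) ^ 2 * ((L : ℝ) + 1) ^ 2 / ε ^ 2 := by
    intro ℓ _
    rw [hN (ℓ + 1) (Nat.le_add_left 1 ℓ)]
    field_simp
  rw [sum_range_succ', sum_congr rfl hfine, sum_const, card_range, nsmul_eq_mul, hN0]
  ring

theorem cost_le (hΔ : 0 < Δ)
    (hN0 : N 0 = 4 * K ^ 2 * (L : ℝ) ^ 2 * ((L : ℝ) + 1) ^ 2 / ε ^ 2)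
    (hN : ∀ ℓ, 1 ≤ ℓ → N ℓ = 4 * K ^ 2 * (Δ / 2 ^ ℓ) * (L : ℝ) ^ 2 * ((L : ℝ) + 1) ^ 2 / ε ^ 2) :
    ∑ ℓ ∈ range (L + 1), N ℓ / (Δ / 2 ^ ℓ)
      ≤ 4 * K ^ 2 * (1 + 1 / Δ) * ((L : ℝ) + 1) ^ 5 / ε ^ 2 := by
  rw [cost_eq hΔ hN0 hN]
  have hsq : (L : ℝ) ^ 2 ≤ ((L : ℝ) + 1) ^ 2 := by gcongr; linarith
  have hlevels : (L : ℝ) + 1 / Δ ≤ ((L : ℝ) + 1) * (1 + 1 / Δ) := by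
    have : 0 ≤ (L : ℝ) * (1 / Δ) := by positivity
    nlinarith
  calc 4 * K ^ 2 * (L : ℝ) ^ 2 * ((L : ℝ) + 1) ^ 2 / ε ^ 2 * (L + 1 / Δ)
      ≤ 4 * K ^ 2 * ((L : ℝ) + 1) ^ 2 * ((L : ℝ) + 1) ^ 2 / ε ^ 2
          * (((L : ℝ) + 1) * (1 + 1 / Δ)) := by gcongr
    _ = 4 * K ^ 2 * (1 + 1 / Δ) * ((L : ℝ) + 1) ^ 5 / ε ^ 2 := by ring

end MLMC

theorem stmt_3_general (K Δt₀ δ : ℝ) (hK : 1 ≤ K) (h0 : 0 < Δt₀)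
    (hδ : δ < 1 / 2) :
    ∃ ε₀ : ℝ, 0 < ε₀ ∧ ∃ C : ℝ, 0 < C ∧
      ∀ ε : ℝ, 0 < ε → ε < ε₀ →
        ∀ L : ℕ, L = ⌈(1 / (1 / 2 - δ)) * Real.logb 2 (2 * K * Δt₀ ^ ((1:ℝ)/2 - δ) / ε)⌉₊ →
        ∀ N : ℕ → ℝ,
          (N 0 = 4 * K ^ 2 * (L : ℝ) ^ 2 * ((L : ℝ) + 1) ^ 2 / ε ^ 2) →
          (∀ ℓ, 1 ≤ ℓ →
            N ℓ = 4 * K ^ 2 * (Δt₀ / 2 ^ ℓ) * (L : ℝ) ^ 2 * ((L : ℝ) + 1) ^ 2 / ε ^ 2) →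
          K * ((Δt₀ / 2 ^ L) ^ ((1:ℝ)/2 - δ) + (L : ℝ) / Real.sqrt (N 0)
              + ∑ m ∈ Finset.Icc 1 L, (m : ℝ) * Real.sqrt ((Δt₀ / 2 ^ m) / N m)) ≤ ε
          ∧ ∑ ℓ ∈ Finset.range (L + 1), N ℓ / (Δt₀ / 2 ^ ℓ)
              ≤ C * ε⁻¹ ^ 2 * (Real.log (1 / ε)) ^ 5 := by
  have hK0 : 0 < K := by linarith
  have ha : 0 < 1 / 2 - δ := by linarith
  set B := 2 * K * Δt₀ ^ (1 / 2 - δ)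
  have hB : 0 < B := by positivity
  set c := (|log B| + 1) / ((1 / 2 - δ) * log 2) + 2
  have hc : 0 < c := by positivity
  refine ⟨min B (exp (-1)), by positivity, 4 * K ^ 2 * (1 + 1 / Δt₀) * c ^ 5, by positivity, ?_⟩
  intro ε hε hεε₀ L hL N hN0 hN
  have hlogb : 0 < 1 / (1 / 2 - δ) * logb 2 (B / ε) :=
    mul_pos (by positivity)
      (logb_pos one_lt_two ((one_lt_div hε).mpr (hεε₀.trans_le (min_le_left _ _))))
  have hL1 : 1 ≤ L := hL ▸ Nat.ceil_pos.mpr hlogb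
  have hbias : 2 * K * (Δt₀ / 2 ^ L) ^ (1 / 2 - δ) ≤ ε :=
    mul_div_two_pow_rpow_le ha (by positivity) h0 hε (hL ▸ Nat.le_ceil _)
  have hlevels : (L : ℝ) + 1 ≤ c * log (1 / ε) :=
    hL ▸ natCeil_mul_logb_add_one_le ha hB hε (hεε₀.le.trans (min_le_right _ _))
  refine ⟨MLMC.error_le hK0 h0 hε hL1 hbias hN0 hN, ?_⟩
  calc ∑ ℓ ∈ range (L + 1), N ℓ / (Δt₀ / 2 ^ ℓ)
      ≤ 4 * K ^ 2 * (1 + 1 / Δt₀) * ((L : ℝ) + 1) ^ 5 / ε ^ 2 := MLMC.cost_le h0 hN0 hN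
    _ ≤ 4 * K ^ 2 * (1 + 1 / Δt₀) * (c * log (1 / ε)) ^ 5 / ε ^ 2 := by gcongr
    _ = 4 * K ^ 2 * (1 + 1 / Δt₀) * c ^ 5 * ε⁻¹ ^ 2 * log (1 / ε) ^ 5 := by ring

/-- Theorem 2, quantitative content (accuracy and complexity of the level/sample choices):
with `L = ⌈(1/(1/2−δ)) log₂(2K Δt₀^{1/2−δ}/ε)⌉`, `N₀ = 4K²L²(L+1)²ε^{−2}` and
`N_ℓ = 4K²Δt_ℓL²(L+1)²ε^{−2}`, the error bound
`K(Δt_L^{1/2−δ} + L/√N₀ + Σ_{m=1}^{L} m √(Δt_m/N_m)) ≤ ε` holds for all small `ε`, and the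
complexity satisfies `Σ_{ℓ=0}^{L} N_ℓ/Δt_ℓ ≤ C ε^{−2} (log(1/ε))^5`. -/
theorem stmt_3 (K Δt₀ δ : ℝ) (hK : 1 ≤ K) (h0 : 0 < Δt₀) (h1 : Δt₀ ≤ 1)
    (hδ0 : 0 < δ) (hδ : δ < 1 / 2) :
    ∃ ε₀ : ℝ, 0 < ε₀ ∧ ∃ C : ℝ, 0 < C ∧
      ∀ ε : ℝ, 0 < ε → ε < ε₀ →
        ∀ L : ℕ, L = ⌈(1 / (1 / 2 - δ)) * Real.logb 2 (2 * K * Δt₀ ^ ((1:ℝ)/2 - δ) / ε)⌉₊ →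
        ∀ N : ℕ → ℝ,
          (N 0 = 4 * K ^ 2 * (L : ℝ) ^ 2 * ((L : ℝ) + 1) ^ 2 / ε ^ 2) →
          (∀ ℓ, 1 ≤ ℓ →
            N ℓ = 4 * K ^ 2 * (Δt₀ / 2 ^ ℓ) * (L : ℝ) ^ 2 * ((L : ℝ) + 1) ^ 2 / ε ^ 2) →
          K * ((Δt₀ / 2 ^ L) ^ ((1:ℝ)/2 - δ) + (L : ℝ) / Real.sqrt (N 0)
              + ∑ m ∈ Finset.Icc 1 L, (m : ℝ) * Real.sqrt ((Δt₀ / 2 ^ m) / N m)) ≤ ε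
          ∧ ∑ ℓ ∈ Finset.range (L + 1), N ℓ / (Δt₀ / 2 ^ ℓ)
              ≤ C * ε⁻¹ ^ 2 * (Real.log (1 / ε)) ^ 5 :=
  stmt_3_general K Δt₀ δ hK h0 hδ
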